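/- Let H, F, E be Hilbert spaces, A ∈ L(H,F), T ∈ L(H,E), b ∈ F, W ∈ L(F)⁺ with W^{1/2} ∈ S₂, and let G(x) = ‖Ax−b‖²_W/(1+‖x‖²) + ‖Tx‖². Then there exists A₀ such that (A₀, x₀) is a global minimizer of the regularized weighted total least squares objective over L(H,F) × H if and only if x₀ is a global minimizer of G; in that case A₀ = A + (⟨·,x₀⟩/(1+‖x₀‖²))(b − Ax₀). -/

import Mathlib

/-!
For fixed `x` write `C = R(A - X)` and `v = R(Ax - b)`, so that `R(Xx - b) = v - Cx`. Since
`‖v‖ ≤ ‖C‖‖x‖ + ‖Cx - v‖` and the operator norm is dominated by the Hilbert–Schmidt norm,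
Cauchy–Schwarz in `ℝ²` gives `‖v‖² / (1 + ‖x‖²) ≤ ‖C‖₂² + ‖Cx - v‖²`. The rank-one correction
`A₀ = A + (⟨·, x⟩ / (1 + ‖x‖²))(b - Ax)` attains this bound, so the partial minimum over `X` of the
objective is `G(x)`, and the two minimization problems have the same minimizers in `x`.
-/

open ContinuousLinearMap
open scoped InnerProductSpace

section

variable {H F G ι ι' κ : Type*} [NormedAddCommGroup H] [InnerProductSpace ℝ H]
  [NormedAddCommGroup F] [InnerProductSpace ℝ F] [NormedAddCommGroup G] [InnerProductSpace ℝ G]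

theorem sq_div_one_add_sq_le {a s t w : ℝ} (ha : 0 ≤ a) (h : a ≤ s * t + w) :
    a ^ 2 / (1 + t ^ 2) ≤ s ^ 2 + w ^ 2 := by
  rw [div_le_iff₀ (by positivity)]
  -- Lagrange's identity: `(s t + w)² + (s - w t)² = (s² + w²)(t² + 1)`
  nlinarith [sq_nonneg (s - w * t), mul_le_mul h h ha (ha.trans h)]

theorem HilbertBasis.hasSum_inner_sq (e : HilbertBasis ι ℝ H) (x : H) :
    HasSum (fun i => ⟪x, e i⟫_ℝ ^ 2) (‖x‖ ^ 2) := by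
  rw [← real_inner_self_eq_norm_sq]
  refine (e.hasSum_inner_mul_inner x x).congr_fun fun i => ?_
  rw [sq, real_inner_comm (e i) x]

section Complete

variable [CompleteSpace H] [CompleteSpace F] [CompleteSpace G]

theorem norm_adjoint_apply_sq_le (e : HilbertBasis ι ℝ H) (C : H →L[ℝ] F)
    (hC : Summable fun i => ‖C (e i)‖ ^ 2) (y : F) :
    ‖adjoint C y‖ ^ 2 ≤ (∑' i, ‖C (e i)‖ ^ 2) * ‖y‖ ^ 2 := by
  have hy := e.hasSum_inner_sq (adjoint C y)
  rw [← hy.tsum_eq, ← tsum_mul_right]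
  refine hy.summable.tsum_le_tsum (fun i => ?_) (hC.mul_right _)
  rw [adjoint_inner_left, real_inner_comm, ← mul_pow, ← sq_abs]
  exact pow_le_pow_left₀ (abs_nonneg _) (abs_real_inner_le_norm _ _) 2

theorem opNorm_sq_le_tsum_norm_sq (e : HilbertBasis ι ℝ H) (C : H →L[ℝ] F)
    (hC : Summable fun i => ‖C (e i)‖ ^ 2) :
    ‖C‖ ^ 2 ≤ ∑' i, ‖C (e i)‖ ^ 2 := by
  have hσ : 0 ≤ ∑' i, ‖C (e i)‖ ^ 2 := tsum_nonneg fun i => sq_nonneg _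
  rw [← Real.le_sqrt (norm_nonneg _) hσ, ← LinearIsometryEquiv.norm_map adjoint C]
  refine opNorm_le_bound _ (Real.sqrt_nonneg _) fun y => ?_
  rw [← pow_le_pow_iff_left₀ (norm_nonneg _) (by positivity) two_ne_zero, mul_pow,
    Real.sq_sqrt hσ]
  exact norm_adjoint_apply_sq_le e C hC y

theorem HilbertBasis.summable_norm_sq_of_summable_adjoint (e : HilbertBasis ι ℝ H)
    (f : HilbertBasis ι' ℝ F) (C : H →L[ℝ] F) (h : Summable fun j => ‖adjoint C (f j)‖ ^ 2) :
    Summable fun i => ‖C (e i)‖ ^ 2 := by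
  -- Both sums are sums of the nonnegative double family `⟪C (e i), f j⟫²`, in the two orders.
  have hrow : ∀ j, HasSum (fun i => ⟪C (e i), f j⟫_ℝ ^ 2) (‖adjoint C (f j)‖ ^ 2) := fun j =>
    (e.hasSum_inner_sq (adjoint C (f j))).congr_fun fun i => by
      rw [adjoint_inner_left, real_inner_comm]
  have hprod : Summable fun p : ι' × ι => ⟪C (e p.2), f p.1⟫_ℝ ^ 2 :=
    (summable_prod_of_nonneg fun _ => sq_nonneg _).2
      ⟨fun j => (hrow j).summable, h.congr fun j => (hrow j).tsum_eq.symm⟩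
  refine ((summable_prod_of_nonneg fun _ => sq_nonneg _).1 hprod.prod_symm).2.congr fun i => ?_
  exact (f.hasSum_inner_sq (C (e i))).tsum_eq

theorem summable_norm_sq_comp (e : HilbertBasis ι ℝ H) (f : HilbertBasis ι' ℝ F)
    (g : HilbertBasis κ ℝ G) (R : F →L[ℝ] G) (hR : Summable fun j => ‖R (f j)‖ ^ 2)
    (C : H →L[ℝ] F) : Summable fun i => ‖(R ∘L C) (e i)‖ ^ 2 := by
  have hR' : Summable fun k => ‖adjoint R (g k)‖ ^ 2 :=
    g.summable_norm_sq_of_summable_adjoint f (adjoint R) (by simpa only [adjoint_adjoint] using hR)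
  refine e.summable_norm_sq_of_summable_adjoint g _ <|
    (hR'.mul_left (‖adjoint C‖ ^ 2)).of_nonneg_of_le (fun _ => sq_nonneg _) fun k => ?_
  rw [adjoint_comp, comp_apply, ← mul_pow]
  exact pow_le_pow_left₀ (norm_nonneg _) (le_opNorm _ _) 2

theorem norm_sq_div_le_tsum_add_norm_sq (e : HilbertBasis ι ℝ H) (C : H →L[ℝ] F)
    (hC : Summable fun i => ‖C (e i)‖ ^ 2) (v : F) (x : H) :
    ‖v‖ ^ 2 / (1 + ‖x‖ ^ 2) ≤ (∑' i, ‖C (e i)‖ ^ 2) + ‖C x - v‖ ^ 2 := by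
  have hv : ‖v‖ ≤ ‖C‖ * ‖x‖ + ‖C x - v‖ :=
    calc ‖v‖ ≤ ‖C x‖ + ‖C x - v‖ := by simpa using norm_sub_le (C x) (C x - v)
      _ ≤ ‖C‖ * ‖x‖ + ‖C x - v‖ := by gcongr; exact le_opNorm C x
  calc ‖v‖ ^ 2 / (1 + ‖x‖ ^ 2) ≤ ‖C‖ ^ 2 + ‖C x - v‖ ^ 2 := sq_div_one_add_sq_le (norm_nonneg v) hv
    _ ≤ _ := by gcongr; exact opNorm_sq_le_tsum_norm_sq e C hC

theorem norm_sq_div_le_tsum_comp_sub_add_norm_sq (e : HilbertBasis ι ℝ H)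
    (f : HilbertBasis ι' ℝ F) (g : HilbertBasis κ ℝ G) (R : F →L[ℝ] G)
    (hR : Summable fun j => ‖R (f j)‖ ^ 2) (A X : H →L[ℝ] F) (b : F) (x : H) :
    ‖R (A x - b)‖ ^ 2 / (1 + ‖x‖ ^ 2) ≤
      (∑' i, ‖(R ∘L (A - X)) (e i)‖ ^ 2) + ‖R (X x - b)‖ ^ 2 := by
  have hres : (R ∘L (A - X)) x - R (A x - b) = -R (X x - b) := by
    simp only [comp_apply, sub_apply, map_sub]
    abel
  simpa only [hres, norm_neg] using norm_sq_div_le_tsum_add_norm_sq e _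
    (summable_norm_sq_comp e f g R hR (A - X)) (R (A x - b)) x

end Complete

noncomputable def tlsOptimalOperator (A : H →L[ℝ] F) (b : F) (x : H) : H →L[ℝ] F :=
  A + (1 / (1 + ‖x‖ ^ 2)) • (innerSL ℝ x).smulRight (b - A x)

theorem tlsOptimalOperator_apply_self_sub (A : H →L[ℝ] F) (b : F) (x : H) :
    tlsOptimalOperator A b x x - b = (1 / (1 + ‖x‖ ^ 2)) • (A x - b) := by
  have hc : 1 - 1 / (1 + ‖x‖ ^ 2) * ‖x‖ ^ 2 = 1 / (1 + ‖x‖ ^ 2) := by field_simp; ring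
  simp only [tlsOptimalOperator, add_apply, smul_apply, smulRight_apply, innerSL_apply_apply,
    real_inner_self_eq_norm_sq, smul_smul]
  linear_combination (norm := module) hc • (A x - b)

theorem hasSum_norm_sq_comp_sub_tlsOptimalOperator (e : HilbertBasis ι ℝ H) (R : F →L[ℝ] G)
    (A : H →L[ℝ] F) (b : F) (x : H) :
    HasSum (fun i => ‖(R ∘L (A - tlsOptimalOperator A b x)) (e i)‖ ^ 2)
      ((1 / (1 + ‖x‖ ^ 2)) ^ 2 * ‖x‖ ^ 2 * ‖R (A x - b)‖ ^ 2) := by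
  refine ((e.hasSum_inner_sq x).mul_left _ |>.mul_right _).congr_fun fun i => ?_
  simp only [tlsOptimalOperator, sub_add_cancel_left, comp_apply, neg_apply, smul_apply,
    smulRight_apply, innerSL_apply_apply, map_neg, map_smul, norm_neg, norm_smul, mul_pow,
    Real.norm_eq_abs, sq_abs, map_sub, norm_sub_rev (R b)]
  ring

theorem tsum_comp_sub_tlsOptimalOperator_add_norm_sq (e : HilbertBasis ι ℝ H) (R : F →L[ℝ] G)
    (A : H →L[ℝ] F) (b : F) (x : H) :
    (∑' i, ‖(R ∘L (A - tlsOptimalOperator A b x)) (e i)‖ ^ 2) +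
        ‖R (tlsOptimalOperator A b x x - b)‖ ^ 2 =
      ‖R (A x - b)‖ ^ 2 / (1 + ‖x‖ ^ 2) := by
  rw [(hasSum_norm_sq_comp_sub_tlsOptimalOperator e R A b x).tsum_eq,
    tlsOptimalOperator_apply_self_sub, map_smul, norm_smul, Real.norm_eq_abs, mul_pow, sq_abs]
  field_simp
  ring

end

theorem stmt11_RWTLS_iff_G_minimizer_general
    {H F E ι ι' : Type*} [NormedAddCommGroup H] [InnerProductSpace ℝ H] [CompleteSpace H]
    [NormedAddCommGroup F] [InnerProductSpace ℝ F] [CompleteSpace F]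
    [NormedAddCommGroup E] [InnerProductSpace ℝ E]
    (A : H →L[ℝ] F) (T : H →L[ℝ] E) (b : F) (x₀ : H) (R : F →L[ℝ] F)
    (f : HilbertBasis ι' ℝ F) (hHS : Summable fun i => ‖R (f i)‖ ^ 2)
    (e : HilbertBasis ι ℝ H) :
    ((∃ A₀ : H →L[ℝ] F, ∀ (X : H →L[ℝ] F) (x : H),
        ‖T x₀‖ ^ 2 + (∑' i, ‖(R.comp (A - A₀)) (e i)‖ ^ 2) + ‖R (A₀ x₀ - b)‖ ^ 2 ≤
          ‖T x‖ ^ 2 + (∑' i, ‖(R.comp (A - X)) (e i)‖ ^ 2) + ‖R (X x - b)‖ ^ 2) ↔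
      (∀ x : H,
        ‖R (A x₀ - b)‖ ^ 2 / (1 + ‖x₀‖ ^ 2) + ‖T x₀‖ ^ 2 ≤
          ‖R (A x - b)‖ ^ 2 / (1 + ‖x‖ ^ 2) + ‖T x‖ ^ 2)) ∧
    ((∀ x : H,
        ‖R (A x₀ - b)‖ ^ 2 / (1 + ‖x₀‖ ^ 2) + ‖T x₀‖ ^ 2 ≤
          ‖R (A x - b)‖ ^ 2 / (1 + ‖x‖ ^ 2) + ‖T x‖ ^ 2) →
      ∀ (X : H →L[ℝ] F) (x : H),
        ‖T x₀‖ ^ 2 +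
          (∑' i, ‖(R.comp (A - (A + (1 / (1 + ‖x₀‖ ^ 2)) •
            (innerSL ℝ x₀).smulRight (b - A x₀)))) (e i)‖ ^ 2) +
          ‖R ((A + (1 / (1 + ‖x₀‖ ^ 2)) • (innerSL ℝ x₀).smulRight (b - A x₀)) x₀ - b)‖ ^ 2 ≤
        ‖T x‖ ^ 2 + (∑' i, ‖(R.comp (A - X)) (e i)‖ ^ 2) + ‖R (X x - b)‖ ^ 2) := by
  have lower := norm_sq_div_le_tsum_comp_sub_add_norm_sq e f f R hHS A
  have attained := tsum_comp_sub_tlsOptimalOperator_add_norm_sq e R A b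
  have optimal : (∀ x : H,
        ‖R (A x₀ - b)‖ ^ 2 / (1 + ‖x₀‖ ^ 2) + ‖T x₀‖ ^ 2 ≤
          ‖R (A x - b)‖ ^ 2 / (1 + ‖x‖ ^ 2) + ‖T x‖ ^ 2) →
      ∀ (X : H →L[ℝ] F) (x : H),
        ‖T x₀‖ ^ 2 + (∑' i, ‖(R ∘L (A - tlsOptimalOperator A b x₀)) (e i)‖ ^ 2) +
            ‖R (tlsOptimalOperator A b x₀ x₀ - b)‖ ^ 2 ≤
          ‖T x‖ ^ 2 + (∑' i, ‖(R ∘L (A - X)) (e i)‖ ^ 2) + ‖R (X x - b)‖ ^ 2 :=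
    fun hG X x => by linarith [hG x, lower X b x, attained x₀]
  refine ⟨⟨fun ⟨A₀, hA₀⟩ x => ?_, fun hG => ⟨_, optimal hG⟩⟩, optimal⟩
  linarith [lower A₀ b x₀, hA₀ (tlsOptimalOperator A b x) x, attained x]

/-- Hilbert spaces `H, F, E`, `A ∈ L(H,F)`, `T ∈ L(H,E)`, `b ∈ F`, `W ∈ L(F)`
positive with square root `R = W^{1/2}` Hilbert–Schmidt, and
`G(x) = ‖Ax−b‖²_W/(1+‖x‖²) + ‖Tx‖²`.  There exists `A₀` such that `(A₀, x₀)` globally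
minimizes the RWTLS objective iff `x₀` globally minimizes `G`; in that case one can take
`A₀ = A + (⟨·,x₀⟩/(1+‖x₀‖²))(b − Ax₀)`. -/
theorem stmt11_RWTLS_iff_G_minimizer
    {H F E ι ι' : Type*} [NormedAddCommGroup H] [InnerProductSpace ℝ H] [CompleteSpace H]
    [NormedAddCommGroup F] [InnerProductSpace ℝ F] [CompleteSpace F]
    [NormedAddCommGroup E] [InnerProductSpace ℝ E] [CompleteSpace E]
    (A : H →L[ℝ] F) (T : H →L[ℝ] E) (b : F) (x₀ : H) (W R : F →L[ℝ] F)
    (hR : R.IsPositive) (hRW : R.comp R = W)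
    (f : HilbertBasis ι' ℝ F) (hHS : Summable fun i => ‖R (f i)‖ ^ 2)
    (e : HilbertBasis ι ℝ H) :
    ((∃ A₀ : H →L[ℝ] F, ∀ (X : H →L[ℝ] F) (x : H),
        ‖T x₀‖ ^ 2 + (∑' i, ‖(R.comp (A - A₀)) (e i)‖ ^ 2) + ‖R (A₀ x₀ - b)‖ ^ 2 ≤
          ‖T x‖ ^ 2 + (∑' i, ‖(R.comp (A - X)) (e i)‖ ^ 2) + ‖R (X x - b)‖ ^ 2) ↔
      (∀ x : H,
        ‖R (A x₀ - b)‖ ^ 2 / (1 + ‖x₀‖ ^ 2) + ‖T x₀‖ ^ 2 ≤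
          ‖R (A x - b)‖ ^ 2 / (1 + ‖x‖ ^ 2) + ‖T x‖ ^ 2)) ∧
    ((∀ x : H,
        ‖R (A x₀ - b)‖ ^ 2 / (1 + ‖x₀‖ ^ 2) + ‖T x₀‖ ^ 2 ≤
          ‖R (A x - b)‖ ^ 2 / (1 + ‖x‖ ^ 2) + ‖T x‖ ^ 2) →
      ∀ (X : H →L[ℝ] F) (x : H),
        ‖T x₀‖ ^ 2 +
          (∑' i, ‖(R.comp (A - (A + (1 / (1 + ‖x₀‖ ^ 2)) •
            (innerSL ℝ x₀).smulRight (b - A x₀)))) (e i)‖ ^ 2) +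
          ‖R ((A + (1 / (1 + ‖x₀‖ ^ 2)) • (innerSL ℝ x₀).smulRight (b - A x₀)) x₀ - b)‖ ^ 2 ≤
        ‖T x‖ ^ 2 + (∑' i, ‖(R.comp (A - X)) (e i)‖ ^ 2) + ‖R (X x - b)‖ ^ 2) :=
  stmt11_RWTLS_iff_G_minimizer_general A T b x₀ R f hHS e
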